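/- Let μ and ν be finite Borel measures on metric spaces X and Y respectively, and let μ × ν be the product measure on X × Y with the maximum metric. Then: (i) updim(μ × ν) ≥ updim μ + lpdim ν; (ii) lpdim(μ × ν) ≥ lpdim μ + lpdim ν. -/

import Mathlib

open Filter MeasureTheory Set
open scoped ENNReal NNReal Topology

namespace ZPaper

variable {X : Type*} [MetricSpace X] {Y : Type*} [MetricSpace Y]

/-- The `δ`-capacity of a set `E`: the supremum of cardinalities of subsets of `E`
whose points are mutually more than `δ` apart. -/
noncomputable def capacity (δ : ℝ) (E : Set X) : ℝ≥0∞ :=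
  ⨆ (F : Finset X) (_ : ↑F ⊆ E ∧ ∀ x ∈ F, ∀ y ∈ F, x ≠ y → δ < dist x y),
    (F.card : ℝ≥0∞)

/-- Lower box (Minkowski) dimension: `liminf_{δ→0} log C_δ(E) / |log δ|`. -/
noncomputable def lbdim (E : Set X) : EReal :=
  Filter.liminf (fun δ : ℝ => (capacity δ E).log / ((|Real.log δ| : ℝ) : EReal)) (𝓝[>] (0:ℝ))

/-- Upper box (Minkowski) dimension: `limsup_{δ→0} log C_δ(E) / |log δ|`. -/
noncomputable def ubdim (E : Set X) : EReal :=
  Filter.limsup (fun δ : ℝ => (capacity δ E).log / ((|Real.log δ| : ℝ) : EReal)) (𝓝[>] (0:ℝ))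

/-- Upper packing dimension: infimum of `sup_n ubdim Eₙ` over countable covers of `E`. -/
noncomputable def updim (E : Set X) : EReal :=
  ⨅ (A : ℕ → Set X) (_ : E ⊆ ⋃ n, A n), ⨆ n, ubdim (A n)

/-- Lower packing dimension: infimum of `sup_n lbdim Eₙ` over countable covers of `E`. -/
noncomputable def lpdim (E : Set X) : EReal :=
  ⨅ (A : ℕ → Set X) (_ : E ⊆ ⋃ n, A n), ⨆ n, lbdim (A n)

/-- Directed lower packing dimension: infimum of `sup_n lbdim Eₙ` over increasing
sequences with union `E`. -/
noncomputable def dpdim (E : Set X) : EReal :=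
  ⨅ (A : ℕ → Set X) (_ : Monotone A ∧ (⋃ n, A n) = E), ⨆ n, lbdim (A n)

/-- A packing: a family of pairs (center, radius) with positive radii such that
`d(x_i, x_j) > r_i` for distinct members. -/
def IsPacking (π : Set (X × ℝ)) : Prop :=
  (∀ p ∈ π, 0 < p.2) ∧ ∀ p ∈ π, ∀ q ∈ π, p ≠ q → p.2 < dist p.1 q.1

/-- A packing of a set `E`: all centers belong to `E`. -/
def IsPackingOf (π : Set (X × ℝ)) (E : Set X) : Prop :=
  IsPacking π ∧ ∀ p ∈ π, p.1 ∈ E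

/-- A uniform packing: all radii equal. -/
def IsUniform (π : Set (X × ℝ)) : Prop := ∀ p ∈ π, ∀ q ∈ π, p.2 = q.2

/-- A scale: a set of positive reals with `0` in its closure. -/
def IsScale (Δ : Set ℝ) : Prop := Δ ⊆ Set.Ioi (0:ℝ) ∧ (0:ℝ) ∈ closure Δ

/-- A `(Δ,δ)`-packing of `E`: a packing of `E` with radii in `Δ ∩ (0, δ]`. -/
def IsScaledPacking (Δ : Set ℝ) (δ : ℝ) (π : Set (X × ℝ)) (E : Set X) : Prop :=
  IsPackingOf π E ∧ ∀ p ∈ π, p.2 ∈ Δ ∧ p.2 ≤ δ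

/-- `g(π) = Σ_i g(r_i)` for a packing `π`. -/
noncomputable def packVal (g : ℝ → ℝ) (π : Set (X × ℝ)) : ℝ≥0∞ :=
  ∑' p : π, ENNReal.ofReal (g p.1.2)

/-- `pack^g_{Δ,δ}(E) = sup{g(π) : π a (Δ,δ)-packing of E}`. -/
noncomputable def packPre (g : ℝ → ℝ) (Δ : Set ℝ) (δ : ℝ) (E : Set X) : ℝ≥0∞ :=
  ⨆ (π : Set (X × ℝ)) (_ : IsScaledPacking Δ δ π E), packVal g π

/-- `pack^g_{Δ,0}(E) = inf_{δ>0} pack^g_{Δ,δ}(E)`. -/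
noncomputable def packPre0 (g : ℝ → ℝ) (Δ : Set ℝ) (E : Set X) : ℝ≥0∞ :=
  ⨅ (δ : ℝ) (_ : 0 < δ), packPre g Δ δ E

/-- Uniform-packing (box) variant of `packPre`. -/
noncomputable def boxPre (g : ℝ → ℝ) (Δ : Set ℝ) (δ : ℝ) (E : Set X) : ℝ≥0∞ :=
  ⨆ (π : Set (X × ℝ)) (_ : IsScaledPacking Δ δ π E ∧ IsUniform π), packVal g π

/-- `boxm^g_{Δ,0}(E) = inf_{δ>0} boxm^g_{Δ,δ}(E)`. -/
noncomputable def boxPre0 (g : ℝ → ℝ) (Δ : Set ℝ) (E : Set X) : ℝ≥0∞ :=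
  ⨅ (δ : ℝ) (_ : 0 < δ), boxPre g Δ δ E

/-- Munroe's Method I construction. -/
noncomputable def methodI (τ : Set X → ℝ≥0∞) (E : Set X) : ℝ≥0∞ :=
  ⨅ (A : ℕ → Set X) (_ : E ⊆ ⋃ n, A n), ∑' n, τ (A n)

/-- The "directed" Method D construction. -/
noncomputable def methodD (τ : Set X → ℝ≥0∞) (E : Set X) : ℝ≥0∞ :=
  ⨅ (A : ℕ → Set X) (_ : Monotone A ∧ (⋃ n, A n) = E), ⨆ n, τ (A n)

/-- The `Δ`-packing measure `pack^g_Δ` (Method I of `pack^g_{Δ,0}`). -/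
noncomputable def packMeasure (g : ℝ → ℝ) (Δ : Set ℝ) : Set X → ℝ≥0∞ :=
  methodI (packPre0 g Δ)

/-- The `Δ`-box measure `boxm^g_Δ` (Method I of `boxm^g_{Δ,0}`). -/
noncomputable def boxMeasure (g : ℝ → ℝ) (Δ : Set ℝ) : Set X → ℝ≥0∞ :=
  methodI (boxPre0 g Δ)

/-- The upper packing pre-measure `upack^g_0 = pack^g_{(0,∞),0}`. -/
noncomputable def upackPre0 (g : ℝ → ℝ) : Set X → ℝ≥0∞ :=
  packPre0 g (Set.Ioi (0:ℝ))

/-- The upper packing (= packing) measure `upack^g`. -/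
noncomputable def upack (g : ℝ → ℝ) : Set X → ℝ≥0∞ :=
  methodI (upackPre0 g)

/-- The lower packing pre-measure `lpack^g_0(E) = inf_Δ pack^g_{Δ,0}(E)`. -/
noncomputable def lpackPre0 (g : ℝ → ℝ) (E : Set X) : ℝ≥0∞ :=
  ⨅ (Δ : Set ℝ) (_ : IsScale Δ), packPre0 g Δ E

/-- The lower packing measure `lpack^g`. -/
noncomputable def lpack (g : ℝ → ℝ) : Set X → ℝ≥0∞ :=
  methodI (lpackPre0 g)

/-- The directed lower packing set function `dpack^g` (Method D of `lpack^g_0`). -/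
noncomputable def dpack (g : ℝ → ℝ) : Set X → ℝ≥0∞ :=
  methodD (lpackPre0 g)

/-- The lower box (Hewitt–Stromberg) pre-measure `lboxm^g_0(E) = liminf_{δ→0} C_δ(E)·g(δ)`. -/
noncomputable def lboxPre0 (g : ℝ → ℝ) (E : Set X) : ℝ≥0∞ :=
  Filter.liminf (fun δ : ℝ => capacity δ E * ENNReal.ofReal (g δ)) (𝓝[>] (0:ℝ))

/-- The upper box pre-measure `uboxm^g_0(E) = limsup_{δ→0} C_δ(E)·g(δ)`. -/
noncomputable def uboxPre0 (g : ℝ → ℝ) (E : Set X) : ℝ≥0∞ :=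
  Filter.limsup (fun δ : ℝ => capacity δ E * ENNReal.ofReal (g δ)) (𝓝[>] (0:ℝ))

/-- The lower box (Hewitt–Stromberg) measure `lboxm^g`. -/
noncomputable def lbox (g : ℝ → ℝ) : Set X → ℝ≥0∞ := methodI (lboxPre0 g)

/-- The upper box measure `uboxm^g`. -/
noncomputable def ubox (g : ℝ → ℝ) : Set X → ℝ≥0∞ := methodI (uboxPre0 g)

/-- The directed lower box set function `dboxm^g` (Method D of `lboxm^g_0`). -/
noncomputable def dbox (g : ℝ → ℝ) : Set X → ℝ≥0∞ := methodD (lboxPre0 g)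

/-- A Hausdorff function: a nondecreasing positive function on `(0,∞)`. -/
def IsHausdorffFunction (g : ℝ → ℝ) : Prop :=
  MonotoneOn g (Set.Ioi (0:ℝ)) ∧ ∀ r : ℝ, 0 < r → 0 < g r

/-- `f ≺ g`: `lim_{r→0⁺} f(r)/g(r) = 0`. -/
def HPrec (f g : ℝ → ℝ) : Prop :=
  Tendsto (fun r => f r / g r) (𝓝[>] (0:ℝ)) (𝓝 0)

/-- The section `E_x = {y : (x,y) ∈ E}` of a set `E ⊆ X × Y`. -/
def sect (E : Set (X × Y)) (x : X) : Set Y := {y | (x, y) ∈ E}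

/-- The integral of a nonnegative function against a set function, via the usual
supremum over Borel simple functions (for a Borel measure this is the Lebesgue integral). -/
noncomputable def sLintegral (τ : Set X → ℝ≥0∞) (f : X → ℝ≥0∞) : ℝ≥0∞ :=
  letI := borel X
  ⨆ (s : SimpleFunc X ℝ≥0∞) (_ : ∀ x, s x ≤ f x), ∑ y ∈ s.range, y * τ (⇑s ⁻¹' {y})

/-- The upper integral `∫* f dτ = inf{∫ φ dτ : φ ≥ f Borel measurable}`. -/
noncomputable def upperIntegral (τ : Set X → ℝ≥0∞) (f : X → ℝ≥0∞) : ℝ≥0∞ :=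
  letI := borel X
  ⨅ (φ : X → ℝ≥0∞) (_ : ∀ x, f x ≤ φ x) (_ : Measurable φ), sLintegral τ φ

/-- `(Q,m)`-homogeneity of a set `A`: `C_r(E) ≤ Q (diam E / r)^m` for all `E ⊆ A`
and all `0 < r ≤ diam E`. -/
def IsHomog (Q m : ℝ) (A : Set X) : Prop :=
  ∀ E : Set X, E ⊆ A → ∀ r : ℝ, 0 < r → ENNReal.ofReal r ≤ EMetric.diam E →
    capacity r E ≤ ENNReal.ofReal Q * (EMetric.diam E / ENNReal.ofReal r) ^ m

/-- The Assouad dimension of a set. -/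
noncomputable def adim (A : Set X) : ℝ≥0∞ :=
  ⨅ (m : ℝ) (_ : 0 < m ∧ ∃ Q : ℝ, 0 ≤ Q ∧ IsHomog Q m A), ENNReal.ofReal m

/-- The countably stable modification of the Assouad dimension. -/
noncomputable def sadim (A : Set X) : ℝ≥0∞ :=
  ⨅ (S : ℕ → Set X) (_ : A ⊆ ⋃ n, S n), ⨆ n, adim (S n)

/-- The upper packing dimension of a Borel measure. -/
noncomputable def updimM {Z : Type*} [MetricSpace Z] [MeasurableSpace Z]
    (μ : Measure Z) : EReal :=
  ⨅ (E : Set Z) (_ : MeasurableSet[borel Z] E ∧ 0 < μ E), updim E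

/-- The lower packing dimension of a Borel measure. -/
noncomputable def lpdimM {Z : Type*} [MetricSpace Z] [MeasurableSpace Z]
    (μ : Measure Z) : EReal :=
  ⨅ (E : Set Z) (_ : MeasurableSet[borel Z] E ∧ 0 < μ E), lpdim E

/-- Euclidean space `ℝ^m`. -/
abbrev Euc (m : ℕ) := EuclideanSpace ℝ (Fin m)

end ZPaper
open Filter MeasureTheory Set ZPaper
open scoped ENNReal NNReal Topology

/-!
Let `E ⊆ X × Y` be Borel with `(μ × ν)(E) > 0` and `t < lpdim ν`. If `E` is not separable, every
countable cover of `E` has a non-separable member, whose box dimensions are infinite. Otherwise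
`E` lies in the product σ-algebra, and by Fubini the set `W` of `x` with `ν(E_x) > 0` has positive
`μ`-measure; for `x ∈ W` we get `t < lpdim E_x`.

For a cover `(Aₙ)` of `E`, some `Wₙ = {x | t < lbdim (Aₙ)_x}` has positive outer measure. At a
scale `δ`, a `δ`-separated family in `Wₙ` whose points carry `δ`-separated families of size
`≥ δ^(-t)` in their sections is, for the maximum metric, a `δ`-separated family in `Aₙ`; hence
`C_δ(Aₙ) ≥ C_δ(Wₙ) δ^(-t)` once the section bound holds uniformly below `δ`, which is arranged by
splitting `Wₙ` countably. This gives `updim Wₙ + t ≤ ubdim Aₙ` and `lpdim Wₙ + t ≤ lbdim Aₙ`.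
Finally `updim μ ≤ updim Wₙ` although `Wₙ` need not be measurable, because box dimensions do not
increase under closure, so packing dimensions may be computed with closed covers.
-/

lemma EReal.add_le_of_forall_coe_lt {a b c : EReal} (h : ∀ u : ℝ, (u : EReal) < b → a + u ≤ c) :
    a + b ≤ c := by
  rcases eq_bot_or_bot_lt b with rfl | hb
  · exact (EReal.add_bot a).trans_le bot_le
  rcases eq_bot_or_bot_lt a with rfl | ha
  · exact (EReal.bot_add b).trans_le bot_le
  refine EReal.add_le_of_forall_lt fun a' ha' b' hb' => ?_
  obtain ⟨u, hb'u, hub⟩ := EReal.exists_between_coe_real hb'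
  exact (add_le_add ha'.le hb'u.le).trans (h u hub)

namespace ZPaper

open TopologicalSpace

variable {X Y : Type*}

section Capacity

variable [MetricSpace X] [MetricSpace Y] {δ δ' : ℝ} {E : Set X}

lemma card_le_capacity {F : Finset X} (hFE : ↑F ⊆ E)
    (hF : ∀ x ∈ F, ∀ y ∈ F, x ≠ y → δ < dist x y) : (F.card : ℝ≥0∞) ≤ capacity δ E :=
  le_iSup₂_of_le F ⟨hFE, hF⟩ le_rfl

lemma capacity_le {c : ℝ≥0∞}
    (h : ∀ F : Finset X, ↑F ⊆ E → (∀ x ∈ F, ∀ y ∈ F, x ≠ y → δ < dist x y) → (F.card : ℝ≥0∞) ≤ c) :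
    capacity δ E ≤ c :=
  iSup₂_le fun F hF => h F hF.1 hF.2

/-- The capacity is a supremum of natural numbers, so a real lower bound is attained. -/
lemma exists_finset_of_ofReal_le_capacity {r : ℝ} (h : ENNReal.ofReal r ≤ capacity δ E) :
    ∃ F : Finset X, ↑F ⊆ E ∧ (∀ x ∈ F, ∀ y ∈ F, x ≠ y → δ < dist x y) ∧ r ≤ F.card := by
  rcases le_or_gt r 0 with hr | hr
  · exact ⟨∅, by simp, by simp, by simpa using hr⟩
  by_contra! hsmall
  have hcap : capacity δ E ≤ ((⌈r⌉₊ - 1 : ℕ) : ℝ≥0∞) := capacity_le fun F hFE hF =>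
    Nat.cast_le.2 (Nat.le_sub_one_of_lt (Nat.lt_ceil.2 (hsmall F hFE hF)))
  have hceil : 1 ≤ ⌈r⌉₊ := Nat.one_le_iff_ne_zero.2 (Nat.ceil_pos.2 hr).ne'
  have hle := h.trans hcap
  rw [ENNReal.ofReal_le_iff_le_toReal (by simp), ENNReal.toReal_natCast, Nat.cast_sub hceil,
    Nat.cast_one] at hle
  linarith [Nat.ceil_lt_add_one hr.le (R := ℝ)]

lemma exists_finset_forall_dist_le (hδ : 0 ≤ δ) (h : capacity δ E ≠ ⊤) :
    ∃ F : Finset X, ↑F ⊆ E ∧ ∀ e ∈ E, ∃ x ∈ F, dist e x ≤ δ := by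
  classical
  obtain ⟨F, hFE, hF, hcard⟩ := exists_finset_of_ofReal_le_capacity (r := (capacity δ E).toReal)
    (ENNReal.ofReal_toReal h).le
  refine ⟨F, hFE, fun e he => ?_⟩
  by_contra! hfar
  have heF : e ∉ F := fun heF => by simpa using hδ.trans_lt (hfar e heF)
  have hins : ((insert e F).card : ℝ≥0∞) ≤ capacity δ E := by
    refine card_le_capacity (by simpa [insert_subset_iff] using ⟨he, hFE⟩) ?_
    simp only [Finset.mem_insert]
    rintro x (rfl | hx) y (rfl | hy) hxy
    · exact absurd rfl hxy
    · exact hfar y hy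
    · exact dist_comm x y ▸ hfar x hx
    · exact hF x hx y hy hxy
  have hmax : capacity δ E ≤ F.card := by
    simpa [ENNReal.ofReal_toReal h] using ENNReal.ofReal_le_ofReal hcard
  have := hins.trans hmax
  rw [Finset.card_insert_of_notMem heF] at this
  norm_cast at this
  omega

lemma totallyBounded_of_frequently_capacity_ne_top
    (h : ∃ᶠ δ in 𝓝[>] (0 : ℝ), capacity δ E ≠ ⊤) : TotallyBounded E := by
  refine Metric.totallyBounded_iff.2 fun ε hε => ?_
  obtain ⟨δ, hcap, hδ⟩ := (h.and_eventually (Ioo_mem_nhdsGT hε)).exists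
  obtain ⟨F, -, hF⟩ := exists_finset_forall_dist_le hδ.1.le hcap
  refine ⟨F, F.finite_toSet, fun e he => ?_⟩
  obtain ⟨x, hx, hex⟩ := hF e he
  exact mem_biUnion hx (Metric.mem_ball.2 (hex.trans_lt hδ.2))

lemma capacity_closure_le (hδ' : 0 ≤ δ') (h : δ' < δ) :
    capacity δ (closure E) ≤ capacity δ' E := by
  classical
  refine capacity_le fun F hFE hF => ?_
  have hnear : ∀ x ∈ F, ∃ y ∈ E, dist x y < (δ - δ') / 2 := fun x hx =>
    Metric.mem_closure_iff.1 (hFE hx) _ (by linarith)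
  choose! g hgE hg using hnear
  have hsep : ∀ x ∈ F, ∀ y ∈ F, x ≠ y → δ' < dist (g x) (g y) := by
    intro x hx y hy hxy
    have := dist_triangle4 x (g x) (g y) y
    linarith [hF x hx y hy hxy, hg x hx, hg y hy, dist_comm y (g y)]
  have hinj : Set.InjOn g F := fun x hx y hy hxy => by
    by_contra hne
    simpa [hxy] using hδ'.trans_lt (hsep x hx y hy hne)
  calc (F.card : ℝ≥0∞) = (F.image g).card := by rw [Finset.card_image_of_injOn hinj]
    _ ≤ capacity δ' E := card_le_capacity
        (by rw [Finset.coe_image, Set.image_subset_iff]; exact fun x hx => hgE x hx)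
        (by
          simp only [Finset.mem_image]
          rintro _ ⟨x, hx, rfl⟩ _ ⟨y, hy, rfl⟩ hxy
          exact hsep x hx y hy fun h => hxy (h ▸ rfl))

/-- For the maximum metric on `X × Y`, separated families in the sections over a separated
family in `S` together form a separated family in `G`. -/
lemma capacity_mul_le_capacity_prod {G : Set (X × Y)} {S : Set X} {r : ℝ}
    (h : ∀ x ∈ S, ENNReal.ofReal r ≤ capacity δ (sect G x)) :
    capacity δ S * ENNReal.ofReal r ≤ capacity δ G := by
  classical
  have hfiber : ∀ x ∈ S, ∃ T : Finset Y, ↑T ⊆ sect G x ∧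
      (∀ y ∈ T, ∀ y' ∈ T, y ≠ y' → δ < dist y y') ∧ r ≤ T.card :=
    fun x hx => exists_finset_of_ofReal_le_capacity (h x hx)
  choose! T hTG hT hTcard using hfiber
  refine (ENNReal.iSup_mul ..).trans_le (iSup_le fun F => ?_)
  refine (ENNReal.iSup_mul ..).trans_le (iSup_le fun hF => ?_)
  set U : Finset (X × Y) := (F.sigma T).map (Equiv.sigmaEquivProd X Y).toEmbedding
  have hU : ∀ p, p ∈ U ↔ p.1 ∈ F ∧ p.2 ∈ T p.1 := by simp [U, Finset.mem_map_equiv]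
  have hUG : ↑U ⊆ G := fun p hp => hTG p.1 (hF.1 ((hU p).1 hp).1) ((hU p).1 hp).2
  have hUsep : ∀ p ∈ U, ∀ q ∈ U, p ≠ q → δ < dist p q := by
    rintro ⟨x, y⟩ hp ⟨x', y'⟩ hq hpq
    rw [hU] at hp hq
    rw [Prod.dist_eq]
    by_cases hxx : x = x'
    · subst hxx
      exact (hT x (hF.1 hp.1) y hp.2 y' hq.2 fun h => hpq (h ▸ rfl)).trans_le (le_max_right _ _)
    · exact (hF.2 x hp.1 x' hq.1 hxx).trans_le (le_max_left _ _)
  have hcard : (F.card : ℝ) * r ≤ U.card := by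
    rw [Finset.card_map, Finset.card_sigma, Nat.cast_sum, ← nsmul_eq_mul, ← Finset.sum_const]
    exact Finset.sum_le_sum fun x hx => hTcard x (hF.1 hx)
  calc (F.card : ℝ≥0∞) * ENNReal.ofReal r = ENNReal.ofReal (F.card * r) := by
        rw [ENNReal.ofReal_mul (Nat.cast_nonneg _), ENNReal.ofReal_natCast]
    _ ≤ U.card := by simpa using ENNReal.ofReal_le_ofReal hcard
    _ ≤ capacity δ G := card_le_capacity hUG hUsep

end Capacity

section BoxDimension

variable [MetricSpace X]

noncomputable def dimRatio (δ : ℝ) (E : Set X) : EReal :=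
  (capacity δ E).log / ((|Real.log δ| : ℝ) : EReal)

lemma lbdim_eq_liminf_dimRatio (E : Set X) :
    lbdim E = liminf (fun δ => dimRatio δ E) (𝓝[>] 0) := rfl

lemma ubdim_eq_limsup_dimRatio (E : Set X) :
    ubdim E = limsup (fun δ => dimRatio δ E) (𝓝[>] 0) := rfl

variable {δ c : ℝ} {E : Set X}

lemma log_ofReal_rpow_neg (hδ : δ ∈ Ioo (0 : ℝ) 1) (c : ℝ) :
    (ENNReal.ofReal (δ ^ (-c))).log = ((c * |Real.log δ| : ℝ) : EReal) := by
  rw [ENNReal.log_ofReal_of_pos (Real.rpow_pos_of_pos hδ.1 _), Real.log_rpow hδ.1,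
    abs_of_neg (Real.log_neg hδ.1 hδ.2)]
  ring_nf

lemma coe_abs_log_pos (hδ : δ ∈ Ioo (0 : ℝ) 1) : (0 : EReal) < ((|Real.log δ| : ℝ) : EReal) :=
  EReal.coe_pos.2 (abs_pos.2 (Real.log_neg hδ.1 hδ.2).ne)

lemma dimRatio_le_coe_iff (hδ : δ ∈ Ioo (0 : ℝ) 1) :
    dimRatio δ E ≤ c ↔ capacity δ E ≤ ENNReal.ofReal (δ ^ (-c)) := by
  rw [dimRatio, EReal.div_le_iff_le_mul (coe_abs_log_pos hδ) (EReal.coe_ne_top _), ← EReal.coe_mul,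
    mul_comm, ← log_ofReal_rpow_neg hδ, ENNReal.log_le_log_iff]

lemma coe_le_dimRatio_iff (hδ : δ ∈ Ioo (0 : ℝ) 1) :
    c ≤ dimRatio δ E ↔ ENNReal.ofReal (δ ^ (-c)) ≤ capacity δ E := by
  rw [dimRatio, EReal.le_div_iff_mul_le (coe_abs_log_pos hδ) (EReal.coe_ne_top _), ← EReal.coe_mul,
    ← log_ofReal_rpow_neg hδ, ENNReal.log_le_log_iff]

lemma dimRatio_eq_top (hδ : δ ∈ Ioo (0 : ℝ) 1) (h : capacity δ E = ⊤) : dimRatio δ E = ⊤ := by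
  rw [dimRatio, h, ENNReal.log_top]
  exact EReal.top_div_of_pos_ne_top (coe_abs_log_pos hδ) (EReal.coe_ne_top _)

lemma lbdim_le_ubdim (E : Set X) : lbdim E ≤ ubdim E := liminf_le_limsup

lemma lbdim_eq_top_of_not_isSeparable (hE : ¬IsSeparable E) : lbdim E = ⊤ := by
  have htop : ∀ᶠ δ in 𝓝[>] (0 : ℝ), capacity δ E = ⊤ := by
    by_contra h
    exact hE (totallyBounded_of_frequently_capacity_ne_top (not_eventually.1 h)).isSeparable
  rw [lbdim_eq_liminf_dimRatio]
  refine top_le_iff.1 (le_liminf_of_le (by isBoundedDefault) ?_)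
  filter_upwards [htop, Ioo_mem_nhdsGT one_pos] with δ hcap hδ
  rw [dimRatio_eq_top hδ hcap]

lemma ubdim_eq_top_of_not_isSeparable (hE : ¬IsSeparable E) : ubdim E = ⊤ :=
  top_le_iff.1 (lbdim_eq_top_of_not_isSeparable hE ▸ lbdim_le_ubdim E)

lemma eventually_half_rpow_neg_le {s' s : ℝ} (hs : s' < s) :
    ∀ᶠ δ in 𝓝[>] (0 : ℝ), (δ / 2) ^ (-s') ≤ δ ^ (-s) := by
  have hbig := (tendsto_rpow_neg_nhdsGT_zero (sub_neg.2 hs)).eventually_ge_atTop ((2 : ℝ) ^ s')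
  filter_upwards [hbig, self_mem_nhdsWithin] with δ hbig (hδ : 0 < δ)
  calc (δ / 2) ^ (-s') = (2 : ℝ) ^ s' * δ ^ (-s') := by
        rw [Real.div_rpow hδ.le zero_le_two, Real.rpow_neg zero_le_two, div_inv_eq_mul, mul_comm]
    _ ≤ δ ^ (s' - s) * δ ^ (-s') := by gcongr
    _ = δ ^ (-s) := by rw [← Real.rpow_add hδ]; ring_nf

lemma eventually_dimRatio_closure_le {s' s : ℝ} (hs : s' < s) :
    ∀ᶠ δ in 𝓝[>] (0 : ℝ), dimRatio (δ / 2) E ≤ s' → dimRatio δ (closure E) ≤ s := by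
  filter_upwards [eventually_half_rpow_neg_le hs, Ioo_mem_nhdsGT one_pos] with δ hpow hδ hratio
  have hδ2 : δ / 2 ∈ Ioo (0 : ℝ) 1 := ⟨half_pos hδ.1, by linarith [hδ.2]⟩
  refine (dimRatio_le_coe_iff hδ).2 ?_
  calc capacity δ (closure E) ≤ capacity (δ / 2) E :=
        capacity_closure_le (half_pos hδ.1).le (half_lt_self hδ.1)
    _ ≤ ENNReal.ofReal ((δ / 2) ^ (-s')) := (dimRatio_le_coe_iff hδ2).1 hratio
    _ ≤ ENNReal.ofReal (δ ^ (-s)) := ENNReal.ofReal_le_ofReal hpow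

lemma tendsto_const_mul_nhdsGT_zero {a : ℝ} (ha : 0 < a) :
    Tendsto (fun δ : ℝ => a * δ) (𝓝[>] 0) (𝓝[>] 0) :=
  tendsto_nhdsWithin_of_tendsto_nhds_of_eventually_within _
    (by simpa using ((continuous_const_mul a).tendsto 0).mono_left nhdsWithin_le_nhds)
    (by filter_upwards [self_mem_nhdsWithin] with δ hδ using mul_pos ha hδ)

lemma ubdim_closure_le (E : Set X) : ubdim (closure E) ≤ ubdim E := by
  refine EReal.le_of_forall_lt_iff_le.1 fun s hs => ?_
  obtain ⟨s', hs', hs's⟩ := EReal.exists_between_coe_real hs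
  rw [ubdim_eq_limsup_dimRatio] at hs' ⊢
  have hhalf : ∀ᶠ δ in 𝓝[>] (0 : ℝ), dimRatio (δ / 2) E < s' := by
    simpa [div_eq_inv_mul] using (tendsto_const_mul_nhdsGT_zero (inv_pos.2 two_pos)).eventually
      (eventually_lt_of_limsup_lt hs')
  refine limsup_le_of_le (by isBoundedDefault) ?_
  filter_upwards [hhalf, eventually_dimRatio_closure_le (E := E) (EReal.coe_lt_coe_iff.1 hs's)]
    with δ hratio himp using himp hratio.le

lemma lbdim_closure_le (E : Set X) : lbdim (closure E) ≤ lbdim E := by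
  refine EReal.le_of_forall_lt_iff_le.1 fun s hs => ?_
  obtain ⟨s', hs', hs's⟩ := EReal.exists_between_coe_real hs
  rw [lbdim_eq_liminf_dimRatio] at hs' ⊢
  have hhalf : ∃ᶠ δ in 𝓝[>] (0 : ℝ), dimRatio (δ / 2) E < s' :=
    (tendsto_const_mul_nhdsGT_zero two_pos).frequently
      (by simpa using frequently_lt_of_liminf_lt (by isBoundedDefault) hs')
  refine liminf_le_of_frequently_le ?_
  exact (hhalf.and_eventually
    (eventually_dimRatio_closure_le (E := E) (EReal.coe_lt_coe_iff.1 hs's))).mono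
    fun δ h => h.2 h.1.le

end BoxDimension

section CoverDimension

variable {Z : Type*}

/-- By definition `updim = coverDim ubdim` and `lpdim = coverDim lbdim`. -/
noncomputable def coverDim (d : Set Z → EReal) (E : Set Z) : EReal :=
  ⨅ (A : ℕ → Set Z) (_ : E ⊆ ⋃ n, A n), ⨆ n, d (A n)

variable {d : Set Z → EReal} {E : Set Z}

lemma coverDim_le_iSup {A : ℕ → Set Z} (hA : E ⊆ ⋃ n, A n) : coverDim d E ≤ ⨆ n, d (A n) :=
  iInf₂_le A hA

lemma coverDim_le_self (E : Set Z) : coverDim d E ≤ d E := by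
  simpa using coverDim_le_iSup (d := d) (A := fun _ => E) (subset_iUnion (fun _ : ℕ => E) 0)

lemma coverDim_eq_top_of_not_isSeparable [TopologicalSpace Z]
    (hd : ∀ A : Set Z, ¬IsSeparable A → d A = ⊤)
    (hE : ¬IsSeparable E) : coverDim d E = ⊤ := by
  refine top_le_iff.1 (le_iInf₂ fun A hA => ?_)
  obtain ⟨n, hn⟩ : ∃ n, ¬IsSeparable (A n) := by
    by_contra! hsep
    exact hE ((IsSeparable.iUnion hsep).mono hA)
  exact (hd _ hn).ge.trans (le_iSup (fun n => d (A n)) n)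

/-- `S` need not be measurable: the closure of some member of a cover of `S` is a Borel set of
positive measure. -/
lemma iInf_coverDim_le_of_measure_ne_zero [TopologicalSpace Z] [MeasurableSpace Z] [BorelSpace Z]
    (μ : Measure Z) (hd : ∀ A : Set Z, d (closure A) ≤ d A) {S : Set Z} (hS : μ S ≠ 0) :
    ⨅ (E : Set Z) (_ : MeasurableSet[borel Z] E ∧ 0 < μ E), coverDim d E ≤ coverDim d S := by
  refine le_iInf₂ fun A hA => ?_
  obtain ⟨n, hn⟩ : ∃ n, μ (closure (A n)) ≠ 0 := by
    by_contra! hnull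
    exact hS (measure_mono_null (hA.trans (iUnion_mono fun n => subset_closure))
      (measure_iUnion_null hnull))
  have hborel : MeasurableSet[borel Z] (closure (A n)) := by
    rw [← BorelSpace.measurable_eq]
    exact isClosed_closure.measurableSet
  calc ⨅ (E : Set Z) (_ : MeasurableSet[borel Z] E ∧ 0 < μ E), coverDim d E
      ≤ coverDim d (closure (A n)) := iInf₂_le _ ⟨hborel, pos_iff_ne_zero.2 hn⟩
    _ ≤ d (A n) := (coverDim_le_self _).trans (hd _)
    _ ≤ ⨆ n, d (A n) := le_iSup (fun n => d (A n)) n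

end CoverDimension

section PackingDimension

variable [MetricSpace X] {E : Set X}

lemma updim_eq_top_of_not_isSeparable (hE : ¬IsSeparable E) : updim E = ⊤ :=
  coverDim_eq_top_of_not_isSeparable (fun _ => ubdim_eq_top_of_not_isSeparable) hE

lemma lpdim_eq_top_of_not_isSeparable (hE : ¬IsSeparable E) : lpdim E = ⊤ :=
  coverDim_eq_top_of_not_isSeparable (fun _ => lbdim_eq_top_of_not_isSeparable) hE

lemma updimM_le_updim [MeasurableSpace X] [BorelSpace X] (μ : Measure X) {S : Set X}
    (hS : μ S ≠ 0) : updimM μ ≤ updim S :=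
  iInf_coverDim_le_of_measure_ne_zero μ ubdim_closure_le hS

lemma lpdimM_le_lpdim [MeasurableSpace X] [BorelSpace X] (μ : Measure X) {S : Set X}
    (hS : μ S ≠ 0) : lpdimM μ ≤ lpdim S :=
  iInf_coverDim_le_of_measure_ne_zero μ lbdim_closure_le hS

end PackingDimension

section Product

variable [MetricSpace Y] {G : Set (X × Y)} {t : ℝ}

lemma coe_add_le_dimRatio_prod [MetricSpace X] {T : Set X} {u δ : ℝ} (hδ : δ ∈ Ioo (0 : ℝ) 1)
    (hT : (u : EReal) ≤ dimRatio δ T)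
    (hfiber : ∀ x ∈ T, ENNReal.ofReal (δ ^ (-t)) ≤ capacity δ (sect G x)) :
    ((t + u : ℝ) : EReal) ≤ dimRatio δ G := by
  refine (coe_le_dimRatio_iff hδ).2 ?_
  calc ENNReal.ofReal (δ ^ (-(t + u)))
        = ENNReal.ofReal (δ ^ (-u)) * ENNReal.ofReal (δ ^ (-t)) := by
        rw [← ENNReal.ofReal_mul (Real.rpow_nonneg hδ.1.le _), ← Real.rpow_add hδ.1, neg_add,
          add_comm]
    _ ≤ capacity δ T * ENNReal.ofReal (δ ^ (-t)) := by
        gcongr; exact (coe_le_dimRatio_iff hδ).1 hT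
    _ ≤ capacity δ G := capacity_mul_le_capacity_prod hfiber

def sectCapacityGe (G : Set (X × Y)) (t η : ℝ) : Set X :=
  {x | ∀ δ ∈ Ioo 0 η, ENNReal.ofReal (δ ^ (-t)) ≤ capacity δ (sect G x)}

lemma setOf_lt_lbdim_sect_subset :
    {x | (t : EReal) < lbdim (sect G x)} ⊆ ⋃ k : ℕ, sectCapacityGe G t (1 / (k + 1)) := by
  intro x (hx : (t : EReal) < liminf (fun δ => dimRatio δ (sect G x)) (𝓝[>] 0))
  have hev : ∀ᶠ δ in 𝓝[>] (0 : ℝ), ENNReal.ofReal (δ ^ (-t)) ≤ capacity δ (sect G x) := by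
    filter_upwards [eventually_lt_of_lt_liminf hx, Ioo_mem_nhdsGT one_pos] with δ hlt hδ
    exact (coe_le_dimRatio_iff hδ).1 hlt.le
  obtain ⟨η, hη : 0 < η, hηsub⟩ := mem_nhdsGT_iff_exists_Ioo_subset.1 hev
  obtain ⟨k, hk⟩ := exists_nat_one_div_lt hη
  exact mem_iUnion.2 ⟨k, fun δ hδ => hηsub ⟨hδ.1, hδ.2.trans hk⟩⟩

lemma lbdim_add_le_lbdim_prod [MetricSpace X] {η : ℝ} (hη : 0 < η) :
    lbdim (sectCapacityGe G t η) + t ≤ lbdim G := by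
  rw [add_comm]
  refine EReal.add_le_of_forall_coe_lt fun u hu => ?_
  refine le_liminf_of_le (by isBoundedDefault) ?_
  filter_upwards [eventually_lt_of_lt_liminf hu, Ioo_mem_nhdsGT (lt_min hη one_pos)]
    with δ hlt hδ
  exact coe_add_le_dimRatio_prod ⟨hδ.1, hδ.2.trans_le (min_le_right _ _)⟩ hlt.le
    fun x hx => hx δ ⟨hδ.1, hδ.2.trans_le (min_le_left _ _)⟩

lemma ubdim_add_le_ubdim_prod [MetricSpace X] {η : ℝ} (hη : 0 < η) :
    ubdim (sectCapacityGe G t η) + t ≤ ubdim G := by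
  rw [add_comm]
  refine EReal.add_le_of_forall_coe_lt fun u hu => ?_
  refine le_limsup_of_frequently_le' ?_
  refine ((frequently_lt_of_lt_limsup (by isBoundedDefault) hu).and_eventually
    (Ioo_mem_nhdsGT (lt_min hη one_pos))).mono fun δ ⟨hlt, hδ⟩ => ?_
  exact coe_add_le_dimRatio_prod ⟨hδ.1, hδ.2.trans_le (min_le_right _ _)⟩ hlt.le
    fun x hx => hx δ ⟨hδ.1, hδ.2.trans_le (min_le_left _ _)⟩

lemma coverDim_add_le_prod {d : Set X → EReal} {D : EReal}
    (hd : ∀ k : ℕ, d (sectCapacityGe G t (1 / (k + 1))) + t ≤ D) {S : Set X}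
    (hS : ∀ x ∈ S, (t : EReal) < lbdim (sect G x)) :
    coverDim d S + t ≤ D := by
  have hcov : S ⊆ ⋃ k : ℕ, sectCapacityGe G t (1 / (k + 1)) := fun x hx =>
    setOf_lt_lbdim_sect_subset (hS x hx)
  refine (add_le_add_left (coverDim_le_iSup hcov) _).trans ?_
  rw [add_comm]
  refine EReal.add_le_of_forall_coe_lt fun u hu => ?_
  obtain ⟨k, hk⟩ := lt_iSup_iff.1 hu
  rw [add_comm]
  exact (add_le_add_left hk.le _).trans (hd k)

lemma updim_add_le_ubdim_prod [MetricSpace X] {S : Set X}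
    (hS : ∀ x ∈ S, (t : EReal) < lbdim (sect G x)) :
    updim S + t ≤ ubdim G :=
  coverDim_add_le_prod (fun _ => ubdim_add_le_ubdim_prod Nat.one_div_pos_of_nat) hS

lemma lpdim_add_le_lbdim_prod [MetricSpace X] {S : Set X}
    (hS : ∀ x ∈ S, (t : EReal) < lbdim (sect G x)) :
    lpdim S + t ≤ lbdim G :=
  coverDim_add_le_prod (fun _ => lbdim_add_le_lbdim_prod Nat.one_div_pos_of_nat) hS

end Product

section Measure

variable [MetricSpace Y] {t : ℝ}

lemma exists_measure_setOf_lt_lbdim_sect_ne_zero [MeasurableSpace X] {μ : Measure X}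
    {E : Set (X × Y)} (h : μ {x | (t : EReal) < lpdim (sect E x)} ≠ 0) {A : ℕ → Set (X × Y)}
    (hA : E ⊆ ⋃ n, A n) : ∃ n, μ {x | (t : EReal) < lbdim (sect (A n) x)} ≠ 0 := by
  have hsub : {x | (t : EReal) < lpdim (sect E x)} ⊆
      ⋃ n, {x | (t : EReal) < lbdim (sect (A n) x)} := by
    intro x hx
    have hcov : sect E x ⊆ ⋃ n, sect (A n) x := fun y hy => by simpa [sect] using hA hy
    obtain ⟨n, hn⟩ := lt_iSup_iff.1 (lt_of_lt_of_le hx (coverDim_le_iSup hcov))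
    exact mem_iUnion.2 ⟨n, hn⟩
  by_contra! hnull
  exact h (measure_mono_null hsub (measure_iUnion_null hnull))

variable [MetricSpace X] [MeasurableSpace X] [BorelSpace X]

lemma updimM_add_le_updim_prod (μ : Measure X) {E : Set (X × Y)}
    (h : μ {x | (t : EReal) < lpdim (sect E x)} ≠ 0) : updimM μ + t ≤ updim E := by
  refine le_iInf₂ fun A hA => ?_
  obtain ⟨n, hn⟩ := exists_measure_setOf_lt_lbdim_sect_ne_zero h hA
  calc updimM μ + t ≤ updim {x | (t : EReal) < lbdim (sect (A n) x)} + t := by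
        gcongr; exact updimM_le_updim μ hn
    _ ≤ ubdim (A n) := updim_add_le_ubdim_prod fun _ hx => hx
    _ ≤ ⨆ n, ubdim (A n) := le_iSup (fun n => ubdim (A n)) n

lemma lpdimM_add_le_lpdim_prod (μ : Measure X) {E : Set (X × Y)}
    (h : μ {x | (t : EReal) < lpdim (sect E x)} ≠ 0) : lpdimM μ + t ≤ lpdim E := by
  refine le_iInf₂ fun A hA => ?_
  obtain ⟨n, hn⟩ := exists_measure_setOf_lt_lbdim_sect_ne_zero h hA
  calc lpdimM μ + t ≤ lpdim {x | (t : EReal) < lbdim (sect (A n) x)} + t := by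
        gcongr; exact lpdimM_le_lpdim μ hn
    _ ≤ lbdim (A n) := lpdim_add_le_lbdim_prod fun _ hx => hx
    _ ≤ ⨆ n, lbdim (A n) := le_iSup (fun n => lbdim (A n)) n

end Measure

section Measurability

variable [TopologicalSpace X] [MeasurableSpace X] [BorelSpace X]
  [MetricSpace Y] [MeasurableSpace Y] [BorelSpace Y]

/-- On `X × C` with `C` separable the Borel σ-algebra is the product one, and
`X × closure (Prod.snd '' E)` embeds measurably into `X × Y`. -/
lemma measurableSet_of_isSeparable_image_snd {E : Set (X × Y)}
    (hE : MeasurableSet[borel (X × Y)] E) (hsep : IsSeparable (Prod.snd '' E)) :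
    MeasurableSet E := by
  set C := closure (Prod.snd '' E)
  have : SeparableSpace C := hsep.closure.separableSpace
  let i : X × C → X × Y := Prod.map id Subtype.val
  have hi : MeasurableEmbedding i :=
    MeasurableEmbedding.id.prodMap (MeasurableEmbedding.subtype_coe isClosed_closure.measurableSet)
  have hpre : MeasurableSet[borel (X × C)] (i ⁻¹' E) :=
    (continuous_id.prodMap continuous_subtype_val).borel_measurable hE
  rw [← BorelSpace.measurable_eq] at hpre
  have hrange : E ⊆ range i := fun p hp =>
    ⟨(p.1, ⟨p.2, subset_closure (mem_image_of_mem _ hp)⟩), rfl⟩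
  simpa [image_preimage_eq_of_subset hrange] using hi.measurableSet_image.2 hpre

end Measurability

section Fubini

variable [MetricSpace X] [MeasurableSpace X] [BorelSpace X]
  [MetricSpace Y] [MeasurableSpace Y] [BorelSpace Y] {t : ℝ}

lemma measure_setOf_lt_lpdim_sect_ne_zero (μ : Measure X) (ν : Measure Y) [SFinite ν]
    {E : Set (X × Y)} (hE : MeasurableSet[borel (X × Y)] E) (hsep : IsSeparable (Prod.snd '' E))
    (hμν : μ.prod ν E ≠ 0) (ht : (t : EReal) < lpdimM ν) :
    μ {x | (t : EReal) < lpdim (sect E x)} ≠ 0 := by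
  have hEm := measurableSet_of_isSeparable_image_snd hE hsep
  have hpos : μ {x | ν (sect E x) ≠ 0} ≠ 0 := by
    rwa [Measure.prod_apply hEm, Ne, lintegral_eq_zero_iff (measurable_measure_prodMk_left hEm),
      EventuallyEq, ae_iff] at hμν
  exact fun hnull =>
    hpos (measure_mono_null (fun x hx => ht.trans_le (lpdimM_le_lpdim ν hx)) hnull)

end Fubini

end ZPaper

theorem stmt18_general {X Y : Type*} [MetricSpace X] [MeasurableSpace X] [BorelSpace X]
    [MetricSpace Y] [MeasurableSpace Y] [BorelSpace Y]
    (μ : Measure X) (ν : Measure Y) [IsFiniteMeasure ν] :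
    (updimM (μ.prod ν) ≥ updimM μ + lpdimM ν) ∧
    (lpdimM (μ.prod ν) ≥ lpdimM μ + lpdimM ν) := by
  have hfiber {E : Set (X × Y)} (hE : MeasurableSet[borel (X × Y)] E ∧ 0 < μ.prod ν E)
      (hsep : TopologicalSpace.IsSeparable E) {t : ℝ} (ht : (t : EReal) < lpdimM ν) :
      μ {x | (t : EReal) < lpdim (sect E x)} ≠ 0 :=
    measure_setOf_lt_lpdim_sect_ne_zero μ ν hE.1 (hsep.image continuous_snd) hE.2.ne' ht
  constructor
  · refine le_iInf₂ fun E hE => EReal.add_le_of_forall_coe_lt fun t ht => ?_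
    by_cases hsep : TopologicalSpace.IsSeparable E
    · exact updimM_add_le_updim_prod μ (hfiber hE hsep ht)
    · exact (updim_eq_top_of_not_isSeparable hsep).symm ▸ le_top
  · refine le_iInf₂ fun E hE => EReal.add_le_of_forall_coe_lt fun t ht => ?_
    by_cases hsep : TopologicalSpace.IsSeparable E
    · exact lpdimM_add_le_lpdim_prod μ (hfiber hE hsep ht)
    · exact (lpdim_eq_top_of_not_isSeparable hsep).symm ▸ le_top

/-- For finite Borel measures `μ`, `ν` on metric spaces `X`, `Y`:
(i) `updim (μ × ν) ≥ updim μ + lpdim ν`; (ii) `lpdim (μ × ν) ≥ lpdim μ + lpdim ν`. -/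
theorem stmt18 {X Y : Type*} [MetricSpace X] [MeasurableSpace X] [BorelSpace X]
    [MetricSpace Y] [MeasurableSpace Y] [BorelSpace Y]
    (μ : Measure X) (ν : Measure Y) [IsFiniteMeasure μ] [IsFiniteMeasure ν] :
    (updimM (μ.prod ν) ≥ updimM μ + lpdimM ν) ∧
    (lpdimM (μ.prod ν) ≥ lpdimM μ + lpdimM ν) :=
  stmt18_general μ ν
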